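/- Starring commutes with join: for a simplex A of a simplicial complex K, a point a in the interior of A, and any simplicial complex L joinable with K, ((A,a)K) ⋆ L = (A,a)(K ⋆ L). -/
import Mathlib


open Classical
noncomputable section

namespace Stellar

variable {V : Type*}

/-- An (abstract) simplicial complex is modelled as a finite set of finite vertex sets. -/
abbrev Cx (V : Type*) := Finset (Finset V)

/-- The vertex set of a complex. -/
def verts (K : Cx V) : Finset V := K.sup id

/-- `K` is a simplicial complex: it contains the empty simplex and is closed under faces. -/
def IsComplex (K : Cx V) : Prop :=
  ∅ ∈ K ∧ ∀ A ∈ K, ∀ B ⊆ A, B ∈ K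

/-- The join `K ⋆ L = {A ⋆ B : A ∈ K, B ∈ L}`. -/
def join (K L : Cx V) : Cx V := (K ×ˢ L).image fun p => p.1 ∪ p.2

/-- Joinability: the vertex sets are (jointly) independent, i.e. disjoint in the
abstract setting. -/
def Joinable (K L : Cx V) : Prop := Disjoint (verts K) (verts L)

/-- The link `lk(A,K) = {B ∈ K : A ⋆ B ∈ K}`. -/
def lk (A : Finset V) (K : Cx V) : Cx V :=
  K.filter fun B => Disjoint A B ∧ A ∪ B ∈ K

/-- The boundary `∂A` of a simplex `A`: the complex of all proper faces of `A`. -/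
def bdry (A : Finset V) : Cx V := A.powerset.erase A

/-- The cone `a ⋆ K` on a complex `K` with apex `a`. -/
def cone (a : V) (K : Cx V) : Cx V := join {∅, {a}} K

/-- The result `(A,a)K` of starring `K` at a new vertex `a` interior to `A`:
remove the star `st(A,K)` and insert `a ⋆ ∂A ⋆ lk(A,K)`. -/
def starAt (A : Finset V) (a : V) (K : Cx V) : Cx V :=
  K.filter (fun B => ¬ A ⊆ B) ∪ cone a (join (bdry A) (lk A K))

/-- `K' = (A,a)K` is a stellar subdivision (starring) of `K`. -/
def IsStarring (A : Finset V) (a : V) (K K' : Cx V) : Prop :=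
  A ∈ K ∧ A ≠ ∅ ∧ a ∉ verts K ∧ K' = starAt A a K

/-- A simplicial isomorphism: a map of vertices, injective on the vertices of `K`,
inducing a bijection of the simplexes. -/
def Isom (K K' : Cx V) : Prop :=
  ∃ f : V → V, Set.InjOn f (verts K) ∧ K' = K.image (Finset.image f)

/-- A single stellar move: a starring, a weld (inverse starring), or an isomorphism. -/
def Move (K K' : Cx V) : Prop :=
  (∃ A a, IsStarring A a K K') ∨ (∃ A a, IsStarring A a K' K) ∨ Isom K K' ∨ Isom K' K

/-- Stellar equivalence `K ∼ K'`. -/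
def SEquiv (K K' : Cx V) : Prop := Relation.ReflTransGen (Move (V := V)) K K'

/-- A stellar `n`-ball: a complex stellar equivalent to the standard simplex `Δⁿ`
(the full powerset of an `(n+1)`-element vertex set). -/
def IsBall (n : ℤ) (K : Cx V) : Prop :=
  ∃ S : Finset V, (S.card : ℤ) = n + 1 ∧ SEquiv K S.powerset

/-- A stellar `n`-sphere: a complex stellar equivalent to `∂Δ^{n+1}`. -/
def IsSphere (n : ℤ) (K : Cx V) : Prop :=
  ∃ S : Finset V, (S.card : ℤ) = n + 2 ∧ SEquiv K (S.powerset.erase S)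

/-- A stellar `n`-manifold: every vertex link is a stellar `(n-1)`-ball or sphere. -/
def IsManifold (n : ℤ) (M : Cx V) : Prop :=
  IsComplex M ∧ ∀ v ∈ verts M, IsBall (n - 1) (lk {v} M) ∨ IsSphere (n - 1) (lk {v} M)

/-- The boundary `∂M` of a stellar manifold: all (nonempty) simplexes whose link in `M`
is a stellar ball, together with the empty simplex. -/
def mbdry (M : Cx V) : Cx V :=
  insert ∅ (M.filter fun A => A ≠ ∅ ∧ ∃ m : ℤ, IsBall m (lk A M))

/-- An internal stellar move on a ball: a starring or weld `(A,a)^{±1}` with `A ∉ ∂K`,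
or an isomorphism. -/
def InternalMove (K K' : Cx V) : Prop :=
  (∃ A a, IsStarring A a K K' ∧ A ∉ mbdry K) ∨
  (∃ A a, IsStarring A a K' K ∧ A ∉ mbdry K') ∨ Isom K K' ∨ Isom K' K

/-- Equivalence by internal stellar moves. -/
def IntEquiv (K K' : Cx V) : Prop := Relation.ReflTransGen (InternalMove (V := V)) K K'

/-- A ball `K` is starrable if `K ∼ v ⋆ ∂K` by internal moves only. -/
def Starrable (K : Cx V) : Prop :=
  ∃ v, v ∉ verts K ∧ IntEquiv K (cone v (mbdry K))

end Stellar
namespace PL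
open Stellar

variable {N : ℕ}

/-- Points of the ambient Euclidean space `ℝ^N`. -/
abbrev Pt (N : ℕ) := Fin N → ℝ

/-- The convex hull of a finite set of points. -/
def hull (A : Finset (Pt N)) : Set (Pt N) := convexHull ℝ (A : Set (Pt N))

/-- Affine independence of a finite set of points. -/
def Indep (A : Finset (Pt N)) : Prop :=
  AffineIndependent ℝ (Subtype.val : {x : Pt N // x ∈ A} → Pt N)

/-- A geometric simplicial complex in `ℝ^N`: faces are affinely independent vertex sets,
closed under subsets, and any two simplexes meet in a common face. -/
def IsGComplex (K : Cx (Pt N)) : Prop :=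
  ∅ ∈ K ∧ (∀ A ∈ K, ∀ B ⊆ A, B ∈ K) ∧ (∀ A ∈ K, Indep A) ∧
    ∀ A ∈ K, ∀ B ∈ K, hull A ∩ hull B = hull (A ∩ B)

/-- The underlying polyhedron `|K|`. -/
def poly (K : Cx (Pt N)) : Set (Pt N) := ⋃ A ∈ K, hull A

/-- `K'` is a (simplicial) subdivision of `K`. -/
def Subdivides (K' K : Cx (Pt N)) : Prop :=
  IsGComplex K' ∧ poly K' = poly K ∧ ∀ A ∈ K', ∃ B ∈ K, hull A ⊆ hull B

/-- Piecewise linear homeomorphism: the complexes admit isomorphic simplicial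
subdivisions. -/
def PLHomeo (K L : Cx (Pt N)) : Prop :=
  ∃ K' L', Subdivides K' K ∧ Subdivides L' L ∧ Isom K' L'

/-- `a` lies in the (open, combinatorial) interior of the simplex `A`. -/
def InteriorPt (A : Finset (Pt N)) (a : Pt N) : Prop :=
  a ∈ hull A ∧ a ∉ poly (bdry A)

/-- A geometric stellar subdivision `K' = (A,a)K`, where `a` is a new point interior
to the simplex `A` of `K`. -/
def GStarring (A : Finset (Pt N)) (a : Pt N) (K K' : Cx (Pt N)) : Prop :=
  A ∈ K ∧ A ≠ ∅ ∧ InteriorPt A a ∧ a ∉ verts K ∧ K' = starAt A a K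

/-- A geometric stellar move: a starring, a weld, or a simplicial isomorphism. -/
def GMove (K K' : Cx (Pt N)) : Prop :=
  (∃ A a, GStarring A a K K') ∨ (∃ A a, GStarring A a K' K) ∨ Isom K K' ∨ Isom K' K

/-- Geometric stellar equivalence. -/
def GEquiv (K K' : Cx (Pt N)) : Prop := Relation.ReflTransGen (GMove (N := N)) K K'

/-- A (geometric) stellar `n`-ball: stellar equivalent to a standard `n`-simplex. -/
def GBall (n : ℤ) (K : Cx (Pt N)) : Prop :=
  ∃ S : Finset (Pt N), Indep S ∧ (S.card : ℤ) = n + 1 ∧ GEquiv K S.powerset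

/-- A combinatorial `n`-ball: PL homeomorphic to a standard `n`-simplex `Δⁿ`. -/
def CombBall (n : ℤ) (K : Cx (Pt N)) : Prop :=
  ∃ S : Finset (Pt N), Indep S ∧ (S.card : ℤ) = n + 1 ∧ PLHomeo K S.powerset

/-- A combinatorial `n`-sphere: PL homeomorphic to `∂Δ^{n+1}`. -/
def CombSphere (n : ℤ) (K : Cx (Pt N)) : Prop :=
  ∃ S : Finset (Pt N), Indep S ∧ (S.card : ℤ) = n + 2 ∧ PLHomeo K (S.powerset.erase S)

end PL
section Aux
open Stellar
variable {V : Type*}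

lemma mem_join' {K L : Cx V} {D : Finset V} :
    D ∈ join K L ↔ ∃ B ∈ K, ∃ C ∈ L, B ∪ C = D := by
  simp only [join, Finset.mem_image, Finset.mem_product, Prod.exists]
  constructor
  · rintro ⟨B, C, ⟨hB, hC⟩, rfl⟩; exact ⟨B, hB, C, hC, rfl⟩
  · rintro ⟨B, hB, C, hC, rfl⟩; exact ⟨B, C, ⟨hB, hC⟩, rfl⟩

lemma subset_verts' {K : Cx V} {B : Finset V} (hB : B ∈ K) : B ⊆ verts K :=
  Finset.le_iff_subset.mp (Finset.le_sup (f := id) hB)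

lemma verts_disjoint' {K L : Cx V} (h : ∀ B ∈ K, ∀ C ∈ L, Disjoint B C) :
    Disjoint (verts K) (verts L) := by
  rw [Finset.disjoint_left]
  intro x hx hx'
  rw [verts, Finset.mem_sup] at hx hx'
  obtain ⟨B, hB, hxB⟩ := hx
  obtain ⟨C, hC, hxC⟩ := hx'
  exact Finset.disjoint_left.1 (h B hB C hC) hxB hxC

lemma join_left_mem' {K L : Cx V} (hV : Disjoint (verts K) (verts L))
    {X C : Finset V} (hX : X ⊆ verts K) (hC : C ∈ L) (hXC : X ∪ C ∈ join K L) : X ∈ K := by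
  rw [mem_join'] at hXC
  obtain ⟨B, hB, C', hC', hE⟩ := hXC
  have hBv := subset_verts' hB
  have hC'v := subset_verts' hC'
  have hCv := subset_verts' hC
  have key : ∀ Y Z : Finset V, Y ⊆ verts K → Z ⊆ verts L → (Y ∪ Z) ∩ verts K = Y := by
    intro Y Z hY hZ
    rw [Finset.union_inter_distrib_right, Finset.inter_eq_left.2 hY,
      Finset.disjoint_iff_inter_eq_empty.1 (hV.symm.mono_left hZ), Finset.union_empty]
  have hBX : B = X := by rw [← key X C hX hCv, ← key B C' hBv hC'v, hE]
  exact hBX ▸ hB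

end Aux

open Stellar PL in
/-- starring commutes with join: `((A,a)K) ⋆ L = (A,a)(K ⋆ L)`. -/
theorem starring_join {N : ℕ} (K K' L : Cx (Pt N)) (A : Finset (Pt N)) (a : Pt N)
    (hK : IsGComplex K) (hL : IsGComplex L)
    (hjoin : ∀ B ∈ K, ∀ C ∈ L, Disjoint B C ∧ Indep (B ∪ C))
    (ha : a ∉ verts L)
    (h : GStarring A a K K') :
    join K' L = starAt A a (join K L) := by
  letI : DecidableEq (Pt N) := fun a b => Classical.propDecidable (a = b)
  obtain ⟨hAK, hAne, hInt, haK, hK'⟩ := h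
  subst hK'
  have hdisj : ∀ B ∈ K, ∀ C ∈ L, Disjoint B C := fun B hB C hC => (hjoin B hB C hC).1
  have hV : Disjoint (verts K) (verts L) := verts_disjoint' hdisj
  have hAv : A ⊆ verts K := subset_verts' hAK
  ext D
  constructor
  · rw [mem_join']
    rintro ⟨B', hB', C, hC, rfl⟩
    have hCv := subset_verts' hC
    rw [starAt, Finset.mem_union] at hB' ⊢
    rcases hB' with hB' | hB'
    · left
      rw [Finset.mem_filter] at hB' ⊢
      obtain ⟨hBK, hnA⟩ := hB'
      refine ⟨mem_join'.2 ⟨B', hBK, C, hC, rfl⟩, fun hsub => hnA fun x hx => ?_⟩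
      rcases Finset.mem_union.1 (hsub hx) with hxB | hxC
      · exact hxB
      · exact absurd (hCv hxC) (Finset.disjoint_left.1 hV (hAv hx))
    · right
      rw [cone, mem_join'] at hB' ⊢
      obtain ⟨E, hE, FG, hFG, rfl⟩ := hB'
      rw [mem_join'] at hFG
      obtain ⟨F, hF, G, hG, rfl⟩ := hFG
      rw [lk, Finset.mem_filter] at hG
      obtain ⟨hGK, hAG, hAGK⟩ := hG
      refine ⟨E, hE, F ∪ (G ∪ C), mem_join'.2 ⟨F, hF, G ∪ C, ?_, rfl⟩, by
        rw [Finset.union_assoc, Finset.union_assoc]⟩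
      rw [lk, Finset.mem_filter]
      refine ⟨mem_join'.2 ⟨G, hGK, C, hC, rfl⟩, ?_, ?_⟩
      · exact Finset.disjoint_union_right.2 ⟨hAG, hV.mono hAv hCv⟩
      · rw [← Finset.union_assoc]
        exact mem_join'.2 ⟨A ∪ G, hAGK, C, hC, rfl⟩
  · rw [starAt, Finset.mem_union, mem_join']
    rintro (hD | hD)
    · rw [Finset.mem_filter, mem_join'] at hD
      obtain ⟨⟨B, hB, C, hC, rfl⟩, hnA⟩ := hD
      refine ⟨B, ?_, C, hC, rfl⟩
      rw [starAt, Finset.mem_union]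
      left
      rw [Finset.mem_filter]
      exact ⟨hB, fun hsub => hnA (hsub.trans Finset.subset_union_left)⟩
    · rw [cone, mem_join'] at hD
      obtain ⟨E, hE, FH, hFH, rfl⟩ := hD
      rw [mem_join'] at hFH
      obtain ⟨F, hF, H, hH, rfl⟩ := hFH
      rw [lk, Finset.mem_filter] at hH
      obtain ⟨hHKL, hAH, hAHKL⟩ := hH
      obtain ⟨B, hB, C, hC, rfl⟩ := mem_join'.1 hHKL
      have hBv := subset_verts' hB
      have hABK : A ∪ B ∈ K := by
        refine join_left_mem' hV (Finset.union_subset hAv hBv) hC ?_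
        rwa [← Finset.union_assoc] at hAHKL
      refine ⟨E ∪ (F ∪ B), ?_, C, hC, by
        rw [Finset.union_assoc, Finset.union_assoc]⟩
      rw [starAt, Finset.mem_union]
      right
      rw [cone, mem_join']
      refine ⟨E, hE, F ∪ B, mem_join'.2 ⟨F, hF, B, ?_, rfl⟩, rfl⟩
      rw [lk, Finset.mem_filter]
      exact ⟨hB, hAH.mono_right Finset.subset_union_left, hABK⟩
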